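/- arXiv:2504.05816 — 2 statements merged into one kernel-verified Lean document; each statement's English description precedes it below -/
import Mathlib

section
/- With θ, f, φ, ψ₁, ψ₂ as in the one-soliton solution (f = νx + 2μνt + f₀, φ = -μx + (ν²-μ²)t + φ₀, ψ₁ = i sin θ e^{iφ} sech f, ψ₂ = cos θ + i sin θ tanh f, cos θ = μ/√(μ²+ν²), sin θ = ν/√(μ²+ν²)), the function λ = 2ν² sech² f is real-valued and the pair (ψ₁, ψ₂) satisfies i∂_tψₖ + ∂ₓₓψₖ + λψₖ = 0 for k = 1, 2. -/
open Complex Real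

noncomputable def dT1 (f : ℝ → ℝ → ℂ) : ℝ → ℝ → ℂ :=
  fun t x => deriv (fun s => f s x) t

noncomputable def dX1 (f : ℝ → ℝ → ℂ) : ℝ → ℝ → ℂ :=
  fun t x => deriv (fun y => f t y) x


lemma coshne (r : ℝ) : Complex.cosh (r:ℂ) ≠ 0 := by
  rw [← Complex.ofReal_cosh]
  exact_mod_cast (Real.cosh_pos r).ne'

lemma haff (a b u : ℝ) : HasDerivAt (fun v : ℝ => ((a*v+b : ℝ) : ℂ)) (a:ℂ) u := by
  have h1 : HasDerivAt (fun v : ℝ => (v : ℂ)) 1 u := Complex.ofRealCLM.hasDerivAt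
  have h2 := (h1.const_mul (a:ℂ)).add_const (b:ℂ)
  simp only [mul_one] at h2
  have he : (fun v : ℝ => ((a*v+b : ℝ):ℂ)) = fun v : ℝ => (a:ℂ)*(v:ℂ) + (b:ℂ) := by
    funext v; push_cast; ring
  rw [he]; exact h2

lemma dexp (a b u : ℝ) :
    HasDerivAt (fun v : ℝ => Complex.exp (I * ((a*v+b : ℝ):ℂ)))
      (I*a*Complex.exp (I * ((a*u+b : ℝ):ℂ))) u := by
  have h := (haff a b u).const_mul I
  have h2 := (Complex.hasDerivAt_exp (I * ((a*u+b:ℝ):ℂ))).comp u h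
  refine h2.congr_deriv (by ring)

lemma dcosh (a b u : ℝ) :
    HasDerivAt (fun v : ℝ => Complex.cosh ((a*v+b:ℝ):ℂ)) ((a:ℂ) * Complex.sinh ((a*u+b:ℝ):ℂ)) u := by
  have h2 := (Complex.hasDerivAt_cosh ((a*u+b:ℝ):ℂ)).comp u (haff a b u)
  refine h2.congr_deriv (by ring)

lemma dsinh (a b u : ℝ) :
    HasDerivAt (fun v : ℝ => Complex.sinh ((a*v+b:ℝ):ℂ)) ((a:ℂ) * Complex.cosh ((a*u+b:ℝ):ℂ)) u := by
  have h2 := (Complex.hasDerivAt_sinh ((a*u+b:ℝ):ℂ)).comp u (haff a b u)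
  refine h2.congr_deriv (by ring)


lemma dsech (p q u : ℝ) :
    HasDerivAt (fun v : ℝ => (Complex.cosh ((p*v+q:ℝ):ℂ))⁻¹)
      (-((p:ℂ) * Complex.sinh ((p*u+q:ℝ):ℂ)) / Complex.cosh ((p*u+q:ℝ):ℂ)^2) u := by
  have h := (hasDerivAt_inv (coshne (p*u+q))).comp u (dcosh p q u)
  refine h.congr_deriv ?_
  field_simp


lemma dpsi1 (s : ℂ) (a b p q u : ℝ) :
    HasDerivAt (fun v : ℝ => I*s*Complex.exp (I*((a*v+b:ℝ):ℂ)) * (Complex.cosh ((p*v+q:ℝ):ℂ))⁻¹)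
      (I*s*Complex.exp (I*((a*u+b:ℝ):ℂ)) * (Complex.cosh ((p*u+q:ℝ):ℂ))⁻¹ *
        (I*a - p*Complex.sinh ((p*u+q:ℝ):ℂ) * (Complex.cosh ((p*u+q:ℝ):ℂ))⁻¹)) u := by
  have hC := coshne ((p*u+q:ℝ))
  have h := ((dexp a b u).const_mul (I*s)).mul (dsech p q u)
  refine h.congr_deriv ?_
  obtain ⟨X, hX⟩ : ∃ X:ℂ, ((p*u+q:ℝ):ℂ) = X := ⟨_, rfl⟩
  obtain ⟨Y, hY⟩ : ∃ Y:ℂ, ((a*u+b:ℝ):ℂ) = Y := ⟨_, rfl⟩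
  rw [hX] at hC
  rw [hX, hY]
  field_simp
  ring

lemma dpsi1' (s : ℂ) (a b p q u : ℝ) :
    HasDerivAt (fun v : ℝ => I*s*Complex.exp (I*((a*v+b:ℝ):ℂ)) * (Complex.cosh ((p*v+q:ℝ):ℂ))⁻¹ *
        (I*a - p*Complex.sinh ((p*v+q:ℝ):ℂ) * (Complex.cosh ((p*v+q:ℝ):ℂ))⁻¹))
      (I*s*Complex.exp (I*((a*u+b:ℝ):ℂ)) * (Complex.cosh ((p*u+q:ℝ):ℂ))⁻¹ *
        ((I*a - p*Complex.sinh ((p*u+q:ℝ):ℂ) * (Complex.cosh ((p*u+q:ℝ):ℂ))⁻¹)^2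
          - p^2*(1 - (Complex.sinh ((p*u+q:ℝ):ℂ) * (Complex.cosh ((p*u+q:ℝ):ℂ))⁻¹)^2))) u := by
  have hC := coshne ((p*u+q:ℝ))
  have hT := (dsinh p q u).mul (dsech p q u)
  have h := (dpsi1 s a b p q u).mul ((hT.const_mul (p:ℂ)).const_sub (I*a))
  convert h using 1
  · rfl
  · funext v; simp only [Pi.mul_apply]; ring
  clear h hT
  simp only [Pi.mul_apply]
  obtain ⟨X, hX⟩ : ∃ X:ℂ, ((p*u+q:ℝ):ℂ) = X := ⟨_, rfl⟩
  obtain ⟨Y, hY⟩ : ∃ Y:ℂ, ((a*u+b:ℝ):ℂ) = Y := ⟨_, rfl⟩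
  rw [hX] at hC
  rw [hX, hY]
  have hS2X : Complex.cosh X^2 - Complex.sinh X^2 = 1 := by
    rw [← hX]; exact Complex.cosh_sq_sub_sinh_sq _
  field_simp
  ring

lemma dpsi2 (c s : ℂ) (p q u : ℝ) :
    HasDerivAt (fun v : ℝ => c + I*s*(Complex.sinh ((p*v+q:ℝ):ℂ) * (Complex.cosh ((p*v+q:ℝ):ℂ))⁻¹))
      (I*s*p*(1 - (Complex.sinh ((p*u+q:ℝ):ℂ) * (Complex.cosh ((p*u+q:ℝ):ℂ))⁻¹)^2)) u := by
  have hC := coshne ((p*u+q:ℝ))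
  have h := (((dsinh p q u).mul (dsech p q u)).const_mul (I*s)).const_add c
  refine h.congr_deriv ?_
  clear h
  obtain ⟨X, hX⟩ : ∃ X:ℂ, ((p*u+q:ℝ):ℂ) = X := ⟨_, rfl⟩
  rw [hX] at hC ⊢
  have hS2X : Complex.cosh X^2 - Complex.sinh X^2 = 1 := by
    rw [← hX]; exact Complex.cosh_sq_sub_sinh_sq _
  field_simp
  ring

lemma dpsi2' (s : ℂ) (p q u : ℝ) :
    HasDerivAt (fun v : ℝ => I*s*(p:ℂ)*(1 - (Complex.sinh ((p*v+q:ℝ):ℂ) * (Complex.cosh ((p*v+q:ℝ):ℂ))⁻¹)^2))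
      (-2*I*s*(p:ℂ)^2*(Complex.sinh ((p*u+q:ℝ):ℂ) * (Complex.cosh ((p*u+q:ℝ):ℂ))⁻¹)
        *(1 - (Complex.sinh ((p*u+q:ℝ):ℂ) * (Complex.cosh ((p*u+q:ℝ):ℂ))⁻¹)^2)) u := by
  have hC := coshne ((p*u+q:ℝ))
  have hT := (dsinh p q u).mul (dsech p q u)
  have h := (((hT.mul hT).const_sub 1).const_mul (I*s*(p:ℂ)))
  have hfe : (fun v : ℝ => I*s*(p:ℂ)*(1 - (Complex.sinh ((p*v+q:ℝ):ℂ) * (Complex.cosh ((p*v+q:ℝ):ℂ))⁻¹)^2))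
      = (fun v : ℝ => I*s*(p:ℂ)*(1 - (Complex.sinh ((p*v+q:ℝ):ℂ) * (Complex.cosh ((p*v+q:ℝ):ℂ))⁻¹)
          * (Complex.sinh ((p*v+q:ℝ):ℂ) * (Complex.cosh ((p*v+q:ℝ):ℂ))⁻¹))) := funext fun v => by ring
  rw [hfe]
  refine h.congr_deriv ?_
  clear h hT
  simp only [Pi.mul_apply]
  obtain ⟨X, hX⟩ : ∃ X:ℂ, ((p*u+q:ℝ):ℂ) = X := ⟨_, rfl⟩
  rw [hX] at hC ⊢
  have hS2X : Complex.cosh X^2 - Complex.sinh X^2 = 1 := by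
    rw [← hX]; exact Complex.cosh_sq_sub_sinh_sq _
  field_simp
  ring

/-- the one-soliton pair satisfies the linear Schrödinger equation
with the real potential λ = 2ν² sech² f. -/
theorem stmt12
    (μ ν f₀ φ₀ θ : ℝ) (hμν : (μ, ν) ≠ (0, 0))
    (hcos : Real.cos θ = μ / Real.sqrt (μ ^ 2 + ν ^ 2))
    (hsin : Real.sin θ = ν / Real.sqrt (μ ^ 2 + ν ^ 2))
    (f φ : ℝ → ℝ → ℝ) (ψ₁ ψ₂ : ℝ → ℝ → ℂ)
    (hf : ∀ t x, f t x = ν * x + 2 * μ * ν * t + f₀)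
    (hφ : ∀ t x, φ t x = -μ * x + (ν ^ 2 - μ ^ 2) * t + φ₀)
    (hψ₁ : ∀ t x, ψ₁ t x =
      Complex.I * (Real.sin θ : ℂ) * Complex.exp (Complex.I * (φ t x : ℂ))
        * (1 / Real.cosh (f t x) : ℝ))
    (hψ₂ : ∀ t x, ψ₂ t x =
      (Real.cos θ : ℂ) + Complex.I * (Real.sin θ : ℂ) * (Real.tanh (f t x) : ℝ)) :
    (∀ t x, Complex.I * dT1 ψ₁ t x + dX1 (dX1 ψ₁) t x
        + ((2 * ν ^ 2 * (1 / Real.cosh (f t x)) ^ 2 : ℝ) : ℂ) * ψ₁ t x = 0) ∧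
    (∀ t x, Complex.I * dT1 ψ₂ t x + dX1 (dX1 ψ₂) t x
        + ((2 * ν ^ 2 * (1 / Real.cosh (f t x)) ^ 2 : ℝ) : ℂ) * ψ₂ t x = 0) := by
  set s : ℂ := (Real.sin θ : ℂ) with hs
  set c : ℂ := (Real.cos θ : ℂ) with hc
  have hrel : (ν:ℂ) * c = (μ:ℂ) * s := by
    have hr : ν * Real.cos θ = μ * Real.sin θ := by rw [hcos, hsin]; ring
    rw [hc, hs]
    exact_mod_cast congrArg (fun r : ℝ => (r:ℂ)) hr
  constructor
  · intro t x
    -- time derivative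
    have h1fun : (fun τ => ψ₁ τ x)
        = fun τ => I*s*Complex.exp (I*(((ν^2-μ^2)*τ+(-μ*x+φ₀):ℝ):ℂ))
            * (Complex.cosh ((2*μ*ν*τ+(ν*x+f₀):ℝ):ℂ))⁻¹ := by
      funext τ
      rw [hψ₁, hφ, hf, one_div, Complex.ofReal_inv, Complex.ofReal_cosh,
        show -μ*x+(ν^2-μ^2)*τ+φ₀ = (ν^2-μ^2)*τ+(-μ*x+φ₀) from by ring,
        show ν*x+2*μ*ν*τ+f₀ = 2*μ*ν*τ+(ν*x+f₀) from by ring]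
    have ht1 : dT1 ψ₁ t x
        = I*s*Complex.exp (I*((-μ*x+(ν^2-μ^2)*t+φ₀:ℝ):ℂ))
            * (Complex.cosh ((ν*x+2*μ*ν*t+f₀:ℝ):ℂ))⁻¹ *
          (I*((ν^2-μ^2:ℝ):ℂ) - ((2*μ*ν:ℝ):ℂ)*Complex.sinh ((ν*x+2*μ*ν*t+f₀:ℝ):ℂ)
            * (Complex.cosh ((ν*x+2*μ*ν*t+f₀:ℝ):ℂ))⁻¹) := by
      have := (dpsi1 s (ν^2-μ^2) (-μ*x+φ₀) (2*μ*ν) (ν*x+f₀) t).deriv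
      unfold dT1
      rw [h1fun, this,
        show (ν^2-μ^2)*t+(-μ*x+φ₀) = -μ*x+(ν^2-μ^2)*t+φ₀ from by ring,
        show 2*μ*ν*t+(ν*x+f₀) = ν*x+2*μ*ν*t+f₀ from by ring]
    -- first space derivative (as a function of y)
    have h1xfun : (fun y => ψ₁ t y)
        = fun y => I*s*Complex.exp (I*((-μ*y+((ν^2-μ^2)*t+φ₀):ℝ):ℂ))
            * (Complex.cosh ((ν*y+(2*μ*ν*t+f₀):ℝ):ℂ))⁻¹ := by
      funext y
      rw [hψ₁, hφ, hf, one_div, Complex.ofReal_inv, Complex.ofReal_cosh,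
        show -μ*y+(ν^2-μ^2)*t+φ₀ = -μ*y+((ν^2-μ^2)*t+φ₀) from by ring,
        show ν*y+2*μ*ν*t+f₀ = ν*y+(2*μ*ν*t+f₀) from by ring]
    have h1x : (fun y => dX1 ψ₁ t y)
        = fun y => I*s*Complex.exp (I*((-μ*y+((ν^2-μ^2)*t+φ₀):ℝ):ℂ))
            * (Complex.cosh ((ν*y+(2*μ*ν*t+f₀):ℝ):ℂ))⁻¹ *
          (I*((-μ:ℝ):ℂ) - ((ν:ℝ):ℂ)*Complex.sinh ((ν*y+(2*μ*ν*t+f₀):ℝ):ℂ)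
            * (Complex.cosh ((ν*y+(2*μ*ν*t+f₀):ℝ):ℂ))⁻¹) := by
      funext y
      unfold dX1
      rw [h1xfun]
      exact (dpsi1 s (-μ) ((ν^2-μ^2)*t+φ₀) ν (2*μ*ν*t+f₀) y).deriv
    have hxx : dX1 (dX1 ψ₁) t x
        = I*s*Complex.exp (I*((-μ*x+(ν^2-μ^2)*t+φ₀:ℝ):ℂ))
            * (Complex.cosh ((ν*x+2*μ*ν*t+f₀:ℝ):ℂ))⁻¹ *
          ((I*((-μ:ℝ):ℂ) - ((ν:ℝ):ℂ)*Complex.sinh ((ν*x+2*μ*ν*t+f₀:ℝ):ℂ)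
              * (Complex.cosh ((ν*x+2*μ*ν*t+f₀:ℝ):ℂ))⁻¹)^2
            - ((ν:ℝ):ℂ)^2*(1 - (Complex.sinh ((ν*x+2*μ*ν*t+f₀:ℝ):ℂ)
              * (Complex.cosh ((ν*x+2*μ*ν*t+f₀:ℝ):ℂ))⁻¹)^2)) := by
      have := (dpsi1' s (-μ) ((ν^2-μ^2)*t+φ₀) ν (2*μ*ν*t+f₀) x).deriv
      show deriv (fun y => dX1 ψ₁ t y) x = _
      rw [h1x, this,
        show -μ*x+((ν^2-μ^2)*t+φ₀) = -μ*x+(ν^2-μ^2)*t+φ₀ from by ring,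
        show ν*x+(2*μ*ν*t+f₀) = ν*x+2*μ*ν*t+f₀ from by ring]
    have hval : ψ₁ t x
        = I*s*Complex.exp (I*((-μ*x+(ν^2-μ^2)*t+φ₀:ℝ):ℂ))
            * (Complex.cosh ((ν*x+2*μ*ν*t+f₀:ℝ):ℂ))⁻¹ := by
      rw [hψ₁, hφ, hf, one_div, Complex.ofReal_inv, Complex.ofReal_cosh]
    have hlam : ((2 * ν ^ 2 * (1 / Real.cosh (f t x)) ^ 2 : ℝ) : ℂ)
        = 2*(ν:ℂ)^2*((Complex.cosh ((ν*x+2*μ*ν*t+f₀:ℝ):ℂ))⁻¹)^2 := by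
      rw [hf]
      push_cast [Complex.ofReal_cosh]
      ring
    rw [ht1, hxx, hval, hlam]
    have hC := coshne ((ν*x+2*μ*ν*t+f₀:ℝ))
    obtain ⟨X, hX⟩ : ∃ X:ℂ, ((ν*x+2*μ*ν*t+f₀:ℝ):ℂ) = X := ⟨_, rfl⟩
    obtain ⟨Y, hY⟩ : ∃ Y:ℂ, ((-μ*x+(ν^2-μ^2)*t+φ₀:ℝ):ℂ) = Y := ⟨_, rfl⟩
    have hS2X : Complex.cosh X^2 - Complex.sinh X^2 = 1 := by
      rw [← hX]; exact Complex.cosh_sq_sub_sinh_sq _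
    rw [hX] at hC
    rw [hX, hY]
    push_cast
    field_simp
    linear_combination (-2*I*s*Complex.exp (I*Y)*(ν:ℂ)^2) * hS2X + (I*s*Complex.exp (I*Y)*Complex.cosh X^2*(ν:ℂ)^2) * Complex.I_sq
  · intro t x
    have h2fun : (fun τ => ψ₂ τ x)
        = fun τ => c + I*s*(Complex.sinh ((2*μ*ν*τ+(ν*x+f₀):ℝ):ℂ)
            * (Complex.cosh ((2*μ*ν*τ+(ν*x+f₀):ℝ):ℂ))⁻¹) := by
      funext τ
      rw [hψ₂, hf, Real.tanh_eq_sinh_div_cosh, Complex.ofReal_div, Complex.ofReal_sinh,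
        Complex.ofReal_cosh, div_eq_mul_inv,
        show ν*x+2*μ*ν*τ+f₀ = 2*μ*ν*τ+(ν*x+f₀) from by ring]
    have ht2 : dT1 ψ₂ t x
        = I*s*((2*μ*ν:ℝ):ℂ)*(1 - (Complex.sinh ((ν*x+2*μ*ν*t+f₀:ℝ):ℂ)
            * (Complex.cosh ((ν*x+2*μ*ν*t+f₀:ℝ):ℂ))⁻¹)^2) := by
      have := (dpsi2 c s (2*μ*ν) (ν*x+f₀) t).deriv
      unfold dT1
      rw [h2fun, this, show 2*μ*ν*t+(ν*x+f₀) = ν*x+2*μ*ν*t+f₀ from by ring]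
    have h2xfun : (fun y => ψ₂ t y)
        = fun y => c + I*s*(Complex.sinh ((ν*y+(2*μ*ν*t+f₀):ℝ):ℂ)
            * (Complex.cosh ((ν*y+(2*μ*ν*t+f₀):ℝ):ℂ))⁻¹) := by
      funext y
      rw [hψ₂, hf, Real.tanh_eq_sinh_div_cosh, Complex.ofReal_div, Complex.ofReal_sinh,
        Complex.ofReal_cosh, div_eq_mul_inv,
        show ν*y+2*μ*ν*t+f₀ = ν*y+(2*μ*ν*t+f₀) from by ring]
    have h2x : (fun y => dX1 ψ₂ t y)
        = fun y => I*s*((ν:ℝ):ℂ)*(1 - (Complex.sinh ((ν*y+(2*μ*ν*t+f₀):ℝ):ℂ)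
            * (Complex.cosh ((ν*y+(2*μ*ν*t+f₀):ℝ):ℂ))⁻¹)^2) := by
      funext y
      unfold dX1
      rw [h2xfun]
      exact (dpsi2 c s ν (2*μ*ν*t+f₀) y).deriv
    have hxx : dX1 (dX1 ψ₂) t x
        = -2*I*s*((ν:ℝ):ℂ)^2*(Complex.sinh ((ν*x+2*μ*ν*t+f₀:ℝ):ℂ)
            * (Complex.cosh ((ν*x+2*μ*ν*t+f₀:ℝ):ℂ))⁻¹)
          *(1 - (Complex.sinh ((ν*x+2*μ*ν*t+f₀:ℝ):ℂ)
            * (Complex.cosh ((ν*x+2*μ*ν*t+f₀:ℝ):ℂ))⁻¹)^2) := by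
      have := (dpsi2' s ν (2*μ*ν*t+f₀) x).deriv
      show deriv (fun y => dX1 ψ₂ t y) x = _
      rw [h2x, this, show ν*x+(2*μ*ν*t+f₀) = ν*x+2*μ*ν*t+f₀ from by ring]
    have hval : ψ₂ t x
        = c + I*s*(Complex.sinh ((ν*x+2*μ*ν*t+f₀:ℝ):ℂ)
            * (Complex.cosh ((ν*x+2*μ*ν*t+f₀:ℝ):ℂ))⁻¹) := by
      rw [hψ₂, hf, Real.tanh_eq_sinh_div_cosh, Complex.ofReal_div, Complex.ofReal_sinh,
        Complex.ofReal_cosh, div_eq_mul_inv]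
    have hlam : ((2 * ν ^ 2 * (1 / Real.cosh (f t x)) ^ 2 : ℝ) : ℂ)
        = 2*(ν:ℂ)^2*((Complex.cosh ((ν*x+2*μ*ν*t+f₀:ℝ):ℂ))⁻¹)^2 := by
      rw [hf]
      push_cast [Complex.ofReal_cosh]
      ring
    rw [ht2, hxx, hval, hlam]
    have hC := coshne ((ν*x+2*μ*ν*t+f₀:ℝ))
    obtain ⟨X, hX⟩ : ∃ X:ℂ, ((ν*x+2*μ*ν*t+f₀:ℝ):ℂ) = X := ⟨_, rfl⟩
    have hS2X : Complex.cosh X^2 - Complex.sinh X^2 = 1 := by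
      rw [← hX]; exact Complex.cosh_sq_sub_sinh_sq _
    rw [hX] at hC
    rw [hX]
    push_cast
    field_simp
    linear_combination (2*(ν:ℂ)*Complex.cosh X) * hrel + (2*s*(μ:ℂ)*(ν:ℂ)*Complex.cosh X) * Complex.I_sq + (2*(ν:ℂ)*I*s*(I*(μ:ℂ)*Complex.cosh X-(ν:ℂ)*Complex.sinh X)) * hS2X
end

section
/- With the one-soliton data ψ₁ = i sin θ e^{iφ} sech f, ψ₂ = cos θ + i sin θ tanh f, where f = νx + 2μνt + f₀ and φ = -μx + (ν²-μ²)t + φ₀ and cos θ = μ/√(μ²+ν²), sin θ = ν/√(μ²+ν²), the vector ψ = (ψ₁,ψ₂) satisfies the nonlinear Schrödinger equation with gradient nonlinearity: iψ_t + ψ_xx + 2(ψ_x†ψ_x)ψ = 0, where ψ_x†ψ_x = |∂ₓψ₁|² + |∂ₓψ₂|². -/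
open Complex Real

private lemma tanh_hd (fv : ℝ → ℝ) (m x : ℝ) (hq : HasDerivAt fv m x) :
    HasDerivAt (fun y => Real.tanh (fv y)) (m * (1 / Real.cosh (fv x)) ^ 2) x := by
  have h1 : HasDerivAt (fun y => Real.sinh (fv y)) (Real.cosh (fv x) * m) x :=
    (Real.hasDerivAt_sinh (fv x)).comp x hq
  have h2 : HasDerivAt (fun y => Real.cosh (fv y)) (Real.sinh (fv x) * m) x :=
    (Real.hasDerivAt_cosh (fv x)).comp x hq
  have hne : Real.cosh (fv x) ≠ 0 := (Real.cosh_pos (x := fv x)).ne'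
  have h3 := h1.div h2 hne
  simp only [Real.tanh_eq_sinh_div_cosh]
  refine h3.congr_deriv ?_
  field_simp
  linear_combination m * Real.cosh_sq_sub_sinh_sq (fv x)

private lemma sech_hd (fv : ℝ → ℝ) (m x : ℝ) (hq : HasDerivAt fv m x) :
    HasDerivAt (fun y => 1 / Real.cosh (fv y))
      (-(m * Real.tanh (fv x)) * (1 / Real.cosh (fv x))) x := by
  have h2 : HasDerivAt (fun y => Real.cosh (fv y)) (Real.sinh (fv x) * m) x :=
    (Real.hasDerivAt_cosh (fv x)).comp x hq
  have hne : Real.cosh (fv x) ≠ 0 := (Real.cosh_pos (x := fv x)).ne'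
  have h3 := h2.inv hne
  simp only [one_div]
  refine h3.congr_deriv ?_
  rw [Real.tanh_eq_sinh_div_cosh]
  field_simp

private lemma auxA (φv fv : ℝ → ℝ) (k m : ℝ) (c₀ c₁ : ℂ) (x : ℝ)
    (hp : HasDerivAt φv k x) (hq : HasDerivAt fv m x) :
    HasDerivAt (fun y => Complex.exp (Complex.I * (φv y : ℂ)) * ((1 / Real.cosh (fv y) : ℝ) : ℂ)
        * (c₀ + c₁ * ((Real.tanh (fv y) : ℝ) : ℂ)))
      (Complex.exp (Complex.I * (φv x : ℂ)) * ((1 / Real.cosh (fv x) : ℝ) : ℂ) *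
        ((Complex.I * (k : ℂ) - (m : ℂ) * ((Real.tanh (fv x) : ℝ) : ℂ))
            * (c₀ + c₁ * ((Real.tanh (fv x) : ℝ) : ℂ))
          + c₁ * (m : ℂ) * ((1 / Real.cosh (fv x) : ℝ) : ℂ) ^ 2)) x := by
  have hE : HasDerivAt (fun y => Complex.exp (Complex.I * (φv y : ℂ)))
      (Complex.exp (Complex.I * (φv x : ℂ)) * (Complex.I * (k : ℂ))) x :=
    ((hp.ofReal_comp).const_mul Complex.I).cexp
  have hsech : HasDerivAt (fun y => ((1 / Real.cosh (fv y) : ℝ) : ℂ))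
      ((-(m * Real.tanh (fv x)) * (1 / Real.cosh (fv x)) : ℝ) : ℂ) x :=
    (sech_hd fv m x hq).ofReal_comp
  have htanh : HasDerivAt (fun y => ((Real.tanh (fv y) : ℝ) : ℂ))
      ((m * (1 / Real.cosh (fv x)) ^ 2 : ℝ) : ℂ) x :=
    (tanh_hd fv m x hq).ofReal_comp
  have H := (hE.mul hsech).mul ((htanh.const_mul c₁).const_add c₀)
  refine H.congr_deriv ?_
  simp only [Pi.mul_apply]
  push_cast
  ring

private lemma auxB (fv : ℝ → ℝ) (m : ℝ) (P Q : ℂ) (x : ℝ) (hq : HasDerivAt fv m x) :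
    HasDerivAt (fun y => P + Q * ((Real.tanh (fv y) : ℝ) : ℂ))
      (Q * ((m : ℂ) * ((1 / Real.cosh (fv x) : ℝ) : ℂ) ^ 2)) x := by
  have htanh : HasDerivAt (fun y => ((Real.tanh (fv y) : ℝ) : ℂ))
      ((m * (1 / Real.cosh (fv x)) ^ 2 : ℝ) : ℂ) x :=
    (tanh_hd fv m x hq).ofReal_comp
  have H := (htanh.const_mul Q).const_add P
  refine H.congr_deriv ?_
  push_cast
  ring

private lemma auxC (fv : ℝ → ℝ) (m : ℝ) (R : ℂ) (x : ℝ) (hq : HasDerivAt fv m x) :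
    HasDerivAt (fun y => R * ((1 / Real.cosh (fv y) : ℝ) : ℂ) ^ 2)
      (R * (-2 * (m : ℂ) * ((Real.tanh (fv x) : ℝ) : ℂ)
        * ((1 / Real.cosh (fv x) : ℝ) : ℂ) ^ 2)) x := by
  have hs := sech_hd fv m x hq
  have H := (((hs.pow 2)).ofReal_comp.const_mul R)
  refine HasDerivAt.congr_of_eventuallyEq (H.congr_deriv ?_) (Filter.Eventually.of_forall fun y => ?_)
  norm_num
  push_cast
  ring
  simp
  simp [Pi.pow_apply]

private lemma nsq_exp (r : ℝ) : Complex.normSq (Complex.exp (Complex.I * (r : ℂ))) = 1 := by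
  rw [Complex.normSq_eq_norm_sq, Complex.norm_exp]
  simp

/-- the one-soliton solves the vector NLSE with gradient nonlinearity
iψ_t + ψ_xx + 2(ψ_x†ψ_x)ψ = 0. -/
theorem stmt13
    (μ ν f₀ φ₀ θ : ℝ) (hμν : (μ, ν) ≠ (0, 0))
    (hcos : Real.cos θ = μ / Real.sqrt (μ ^ 2 + ν ^ 2))
    (hsin : Real.sin θ = ν / Real.sqrt (μ ^ 2 + ν ^ 2))
    (f φ : ℝ → ℝ → ℝ) (ψ₁ ψ₂ : ℝ → ℝ → ℂ)
    (hf : ∀ t x, f t x = ν * x + 2 * μ * ν * t + f₀)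
    (hφ : ∀ t x, φ t x = -μ * x + (ν ^ 2 - μ ^ 2) * t + φ₀)
    (hψ₁ : ∀ t x, ψ₁ t x =
      Complex.I * (Real.sin θ : ℂ) * Complex.exp (Complex.I * (φ t x : ℂ))
        * (1 / Real.cosh (f t x) : ℝ))
    (hψ₂ : ∀ t x, ψ₂ t x =
      (Real.cos θ : ℂ) + Complex.I * (Real.sin θ : ℂ) * (Real.tanh (f t x) : ℝ)) :
    (∀ t x, Complex.I * dT1 ψ₁ t x + dX1 (dX1 ψ₁) t x
        + 2 * ((Complex.normSq (dX1 ψ₁ t x) + Complex.normSq (dX1 ψ₂ t x) : ℝ) : ℂ)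
          * ψ₁ t x = 0) ∧
    (∀ t x, Complex.I * dT1 ψ₂ t x + dX1 (dX1 ψ₂) t x
        + 2 * ((Complex.normSq (dX1 ψ₁ t x) + Complex.normSq (dX1 ψ₂ t x) : ℝ) : ℂ)
          * ψ₂ t x = 0) := by
  have hne0 : μ ^ 2 + ν ^ 2 ≠ 0 := by
    intro h
    apply hμν
    have hμ0 : μ = 0 := by nlinarith [sq_nonneg μ, sq_nonneg ν]
    have hν0 : ν = 0 := by nlinarith [sq_nonneg μ, sq_nonneg ν]
    simp [hμ0, hν0]
  have hS2 : Real.sin θ ^ 2 * (μ ^ 2 + ν ^ 2) = ν ^ 2 := by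
    rw [hsin, div_pow, Real.sq_sqrt (by positivity)]
    field_simp
  have hCS : ν * Real.cos θ = μ * Real.sin θ := by
    rw [hcos, hsin]; ring
  have hfx : ∀ t x, HasDerivAt (fun y => f t y) ν x := by
    intro t x
    have h : HasDerivAt (fun y : ℝ => ν * y + (2 * μ * ν * t + f₀)) ν x := by
      simpa using ((hasDerivAt_id x).const_mul ν).add_const (2 * μ * ν * t + f₀)
    exact h.congr_of_eventuallyEq (Filter.Eventually.of_forall fun y => by show f t y = _; rw [hf]; ring)
  have hφx : ∀ t x, HasDerivAt (fun y => φ t y) (-μ) x := by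
    intro t x
    have h : HasDerivAt (fun y : ℝ => -μ * y + ((ν ^ 2 - μ ^ 2) * t + φ₀)) (-μ) x := by
      simpa using ((hasDerivAt_id x).const_mul (-μ)).add_const ((ν ^ 2 - μ ^ 2) * t + φ₀)
    exact h.congr_of_eventuallyEq (Filter.Eventually.of_forall fun y => by show φ t y = _; rw [hφ]; ring)
  have hft : ∀ t x, HasDerivAt (fun s => f s x) (2 * μ * ν) t := by
    intro t x
    have h : HasDerivAt (fun s : ℝ => 2 * μ * ν * s + (ν * x + f₀)) (2 * μ * ν) t := by
      simpa using ((hasDerivAt_id t).const_mul (2 * μ * ν)).add_const (ν * x + f₀)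
    exact h.congr_of_eventuallyEq (Filter.Eventually.of_forall fun s => by show f s x = _; rw [hf]; ring)
  have hφt : ∀ t x, HasDerivAt (fun s => φ s x) (ν ^ 2 - μ ^ 2) t := by
    intro t x
    have h : HasDerivAt (fun s : ℝ => (ν ^ 2 - μ ^ 2) * s + (-μ * x + φ₀)) (ν ^ 2 - μ ^ 2) t := by
      simpa using ((hasDerivAt_id t).const_mul (ν ^ 2 - μ ^ 2)).add_const (-μ * x + φ₀)
    exact h.congr_of_eventuallyEq (Filter.Eventually.of_forall fun s => by show φ s x = _; rw [hφ]; ring)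
  -- first x-derivative of ψ₁
  have key1 : ∀ t x, dX1 ψ₁ t x =
      Complex.exp (Complex.I * (φ t x : ℂ)) * ((1 / Real.cosh (f t x) : ℝ) : ℂ) *
        ((μ : ℂ) * (Real.sin θ : ℂ)
          + (-Complex.I * (Real.sin θ : ℂ) * (ν : ℂ)) * ((Real.tanh (f t x) : ℝ) : ℂ)) := by
    intro t x
    have hfun : (fun y => ψ₁ t y) = (fun y =>
        Complex.exp (Complex.I * (φ t y : ℂ)) * ((1 / Real.cosh (f t y) : ℝ) : ℂ) *
          ((Complex.I * (Real.sin θ : ℂ)) + 0 * ((Real.tanh (f t y) : ℝ) : ℂ))) :=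
      funext fun y => by rw [hψ₁]; ring
    have hd := auxA (fun y => φ t y) (fun y => f t y) (-μ) ν
      (Complex.I * (Real.sin θ : ℂ)) 0 x (hφx t x) (hfx t x)
    have h2 : deriv (fun y => ψ₁ t y) x =
        Complex.exp (Complex.I * (φ t x : ℂ)) * ((1 / Real.cosh (f t x) : ℝ) : ℂ) *
          ((Complex.I * ((-μ : ℝ) : ℂ) - (ν : ℂ) * ((Real.tanh (f t x) : ℝ) : ℂ))
              * ((Complex.I * (Real.sin θ : ℂ)) + 0 * ((Real.tanh (f t x) : ℝ) : ℂ))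
            + 0 * (ν : ℂ) * ((1 / Real.cosh (f t x) : ℝ) : ℂ) ^ 2) := by
      rw [hfun]; exact hd.deriv
    show deriv (fun y => ψ₁ t y) x = _
    rw [h2]
    simp only [Complex.ofReal_neg]
    linear_combination (-(Complex.exp (Complex.I * (φ t x : ℂ)) *
      ((1 / Real.cosh (f t x) : ℝ) : ℂ) * (μ : ℂ) * (Real.sin θ : ℂ))) * Complex.I_sq
  -- second x-derivative of ψ₁
  have key1xx : ∀ t x, dX1 (dX1 ψ₁) t x =
      Complex.exp (Complex.I * (φ t x : ℂ)) * ((1 / Real.cosh (f t x) : ℝ) : ℂ) *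
        ((-Complex.I * (μ : ℂ) - (ν : ℂ) * ((Real.tanh (f t x) : ℝ) : ℂ)) *
            ((μ : ℂ) * (Real.sin θ : ℂ)
              - Complex.I * (Real.sin θ : ℂ) * (ν : ℂ) * ((Real.tanh (f t x) : ℝ) : ℂ))
          + (-Complex.I * (Real.sin θ : ℂ) * (ν : ℂ)) * (ν : ℂ)
              * ((1 / Real.cosh (f t x) : ℝ) : ℂ) ^ 2) := by
    intro t x
    have hfun : (fun y => dX1 ψ₁ t y) = (fun y =>
        Complex.exp (Complex.I * (φ t y : ℂ)) * ((1 / Real.cosh (f t y) : ℝ) : ℂ) *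
          (((μ : ℂ) * (Real.sin θ : ℂ))
            + (-Complex.I * (Real.sin θ : ℂ) * (ν : ℂ)) * ((Real.tanh (f t y) : ℝ) : ℂ))) :=
      funext fun y => by rw [key1]
    have hd := auxA (fun y => φ t y) (fun y => f t y) (-μ) ν
      ((μ : ℂ) * (Real.sin θ : ℂ)) (-Complex.I * (Real.sin θ : ℂ) * (ν : ℂ)) x
      (hφx t x) (hfx t x)
    have h2 : deriv (fun y => dX1 ψ₁ t y) x =
        Complex.exp (Complex.I * (φ t x : ℂ)) * ((1 / Real.cosh (f t x) : ℝ) : ℂ) *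
          ((Complex.I * ((-μ : ℝ) : ℂ) - (ν : ℂ) * ((Real.tanh (f t x) : ℝ) : ℂ))
              * (((μ : ℂ) * (Real.sin θ : ℂ))
                + (-Complex.I * (Real.sin θ : ℂ) * (ν : ℂ)) * ((Real.tanh (f t x) : ℝ) : ℂ))
            + (-Complex.I * (Real.sin θ : ℂ) * (ν : ℂ)) * (ν : ℂ)
                * ((1 / Real.cosh (f t x) : ℝ) : ℂ) ^ 2) := by
      rw [hfun]; exact hd.deriv
    show deriv (fun y => dX1 ψ₁ t y) x = _
    rw [h2]
    simp only [Complex.ofReal_neg]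
    ring
  -- t-derivative of ψ₁
  have key1t : ∀ t x, dT1 ψ₁ t x =
      Complex.exp (Complex.I * (φ t x : ℂ)) * ((1 / Real.cosh (f t x) : ℝ) : ℂ) *
        ((Complex.I * ((ν : ℂ) ^ 2 - (μ : ℂ) ^ 2)
            - 2 * (μ : ℂ) * (ν : ℂ) * ((Real.tanh (f t x) : ℝ) : ℂ))
          * (Complex.I * (Real.sin θ : ℂ))) := by
    intro t x
    have hfun : (fun s => ψ₁ s x) = (fun s =>
        Complex.exp (Complex.I * (φ s x : ℂ)) * ((1 / Real.cosh (f s x) : ℝ) : ℂ) *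
          ((Complex.I * (Real.sin θ : ℂ)) + 0 * ((Real.tanh (f s x) : ℝ) : ℂ))) :=
      funext fun s => by rw [hψ₁]; ring
    have hd := auxA (fun s => φ s x) (fun s => f s x) (ν ^ 2 - μ ^ 2) (2 * μ * ν)
      (Complex.I * (Real.sin θ : ℂ)) 0 t (hφt t x) (hft t x)
    have h2 : deriv (fun s => ψ₁ s x) t =
        Complex.exp (Complex.I * (φ t x : ℂ)) * ((1 / Real.cosh (f t x) : ℝ) : ℂ) *
          ((Complex.I * ((ν ^ 2 - μ ^ 2 : ℝ) : ℂ)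
              - ((2 * μ * ν : ℝ) : ℂ) * ((Real.tanh (f t x) : ℝ) : ℂ))
              * ((Complex.I * (Real.sin θ : ℂ)) + 0 * ((Real.tanh (f t x) : ℝ) : ℂ))
            + 0 * ((2 * μ * ν : ℝ) : ℂ) * ((1 / Real.cosh (f t x) : ℝ) : ℂ) ^ 2) := by
      rw [hfun]; exact hd.deriv
    show deriv (fun s => ψ₁ s x) t = _
    rw [h2]
    push_cast
    ring
  -- first x-derivative of ψ₂
  have key2x : ∀ t x, dX1 ψ₂ t x =
      Complex.I * (Real.sin θ : ℂ) * (ν : ℂ) * ((1 / Real.cosh (f t x) : ℝ) : ℂ) ^ 2 := by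
    intro t x
    have hfun : (fun y => ψ₂ t y) = (fun y =>
        ((Real.cos θ : ℂ)) + (Complex.I * (Real.sin θ : ℂ)) * ((Real.tanh (f t y) : ℝ) : ℂ)) :=
      funext fun y => by rw [hψ₂]
    have hd := auxB (fun y => f t y) ν ((Real.cos θ : ℂ)) (Complex.I * (Real.sin θ : ℂ)) x
      (hfx t x)
    have h2 : deriv (fun y => ψ₂ t y) x =
        (Complex.I * (Real.sin θ : ℂ)) * ((ν : ℂ) * ((1 / Real.cosh (f t x) : ℝ) : ℂ) ^ 2) := by
      rw [hfun]; exact hd.deriv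
    show deriv (fun y => ψ₂ t y) x = _
    rw [h2]
    all_goals ring
  -- second x-derivative of ψ₂
  have key2xx : ∀ t x, dX1 (dX1 ψ₂) t x =
      Complex.I * (Real.sin θ : ℂ) * (ν : ℂ) * (-2 * (ν : ℂ) * ((Real.tanh (f t x) : ℝ) : ℂ)
        * ((1 / Real.cosh (f t x) : ℝ) : ℂ) ^ 2) := by
    intro t x
    have hfun : (fun y => dX1 ψ₂ t y) = (fun y =>
        (Complex.I * (Real.sin θ : ℂ) * (ν : ℂ)) * ((1 / Real.cosh (f t y) : ℝ) : ℂ) ^ 2) :=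
      funext fun y => by rw [key2x]
    have hd := auxC (fun y => f t y) ν (Complex.I * (Real.sin θ : ℂ) * (ν : ℂ)) x (hfx t x)
    have h2 : deriv (fun y => dX1 ψ₂ t y) x =
        (Complex.I * (Real.sin θ : ℂ) * (ν : ℂ)) * (-2 * (ν : ℂ)
          * ((Real.tanh (f t x) : ℝ) : ℂ) * ((1 / Real.cosh (f t x) : ℝ) : ℂ) ^ 2) := by
      rw [hfun]; exact hd.deriv
    show deriv (fun y => dX1 ψ₂ t y) x = _
    rw [h2]
    all_goals ring
  -- t-derivative of ψ₂
  have key2t : ∀ t x, dT1 ψ₂ t x =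
      Complex.I * (Real.sin θ : ℂ) * (2 * (μ : ℂ) * (ν : ℂ))
        * ((1 / Real.cosh (f t x) : ℝ) : ℂ) ^ 2 := by
    intro t x
    have hfun : (fun s => ψ₂ s x) = (fun s =>
        ((Real.cos θ : ℂ)) + (Complex.I * (Real.sin θ : ℂ)) * ((Real.tanh (f s x) : ℝ) : ℂ)) :=
      funext fun s => by rw [hψ₂]
    have hd := auxB (fun s => f s x) (2 * μ * ν) ((Real.cos θ : ℂ))
      (Complex.I * (Real.sin θ : ℂ)) t (hft t x)
    have h2 : deriv (fun s => ψ₂ s x) t =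
        (Complex.I * (Real.sin θ : ℂ)) * (((2 * μ * ν : ℝ) : ℂ)
          * ((1 / Real.cosh (f t x) : ℝ) : ℂ) ^ 2) := by
      rw [hfun]; exact hd.deriv
    show deriv (fun s => ψ₂ s x) t = _
    rw [h2]
    all_goals push_cast
    all_goals ring
  -- the tanh/sech identity
  have hw : ∀ t x, (1 / Real.cosh (f t x)) ^ 2 = 1 - Real.tanh (f t x) ^ 2 := by
    intro t x
    have h := Real.cosh_sq_sub_sinh_sq (f t x)
    have hne : Real.cosh (f t x) ≠ 0 := (Real.cosh_pos (x := f t x)).ne'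
    rw [Real.tanh_eq_sinh_div_cosh]
    field_simp
    linarith
  -- the nonlinearity
  have keyN : ∀ t x, Complex.normSq (dX1 ψ₁ t x) + Complex.normSq (dX1 ψ₂ t x)
      = ν ^ 2 * (1 / Real.cosh (f t x)) ^ 2 := by
    intro t x
    rw [key1, key2x]
    have e1 : Complex.exp (Complex.I * (φ t x : ℂ)) * ((1 / Real.cosh (f t x) : ℝ) : ℂ) *
        ((μ : ℂ) * (Real.sin θ : ℂ)
          + (-Complex.I * (Real.sin θ : ℂ) * (ν : ℂ)) * ((Real.tanh (f t x) : ℝ) : ℂ))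
        = Complex.exp (Complex.I * (φ t x : ℂ)) *
          (((1 / Real.cosh (f t x)) * (μ * Real.sin θ) : ℝ)
            + ((-((1 / Real.cosh (f t x)) * Real.sin θ * ν * Real.tanh (f t x)) : ℝ))
              * Complex.I) := by
      push_cast; ring
    have e2 : Complex.I * (Real.sin θ : ℂ) * (ν : ℂ) * ((1 / Real.cosh (f t x) : ℝ) : ℂ) ^ 2
        = ((0 : ℝ) : ℂ)
          + ((Real.sin θ * ν * (1 / Real.cosh (f t x)) ^ 2 : ℝ)) * Complex.I := by
      push_cast; ring
    rw [e1, e2, Complex.normSq_mul, nsq_exp, Complex.normSq_add_mul_I,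
      Complex.normSq_add_mul_I, one_mul]
    linear_combination (Real.sin θ ^ 2 * ν ^ 2 * (1 / Real.cosh (f t x)) ^ 2) * hw t x
      + ((1 / Real.cosh (f t x)) ^ 2) * hS2
  constructor
  · intro t x
    have hwC : ((1 / Real.cosh (f t x) : ℝ) : ℂ) ^ 2
        = 1 - ((Real.tanh (f t x) : ℝ) : ℂ) ^ 2 := by
      exact_mod_cast congrArg (fun r : ℝ => (r : ℂ)) (hw t x)
    rw [keyN, key1t, key1xx, hψ₁ t x]
    simp only [Complex.ofReal_mul, Complex.ofReal_pow]
    linear_combination (Complex.exp (Complex.I * (φ t x : ℂ)) *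
        ((1 / Real.cosh (f t x) : ℝ) : ℂ) *
        (Complex.I * (Real.sin θ : ℂ) * ((ν : ℂ) ^ 2 - (μ : ℂ) ^ 2)
          - (μ : ℂ) * (ν : ℂ) * (Real.sin θ : ℂ) * ((Real.tanh (f t x) : ℝ) : ℂ)))
        * Complex.I_sq
      + (Complex.exp (Complex.I * (φ t x : ℂ)) * ((1 / Real.cosh (f t x) : ℝ) : ℂ)
          * Complex.I * (ν : ℂ) ^ 2 * (Real.sin θ : ℂ)) * hwC
  · intro t x
    have hCSC : (ν : ℂ) * (Real.cos θ : ℂ) = (μ : ℂ) * (Real.sin θ : ℂ) := by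
      exact_mod_cast congrArg (fun r : ℝ => (r : ℂ)) hCS
    rw [keyN, key2t, key2xx, hψ₂ t x]
    simp only [Complex.ofReal_mul, Complex.ofReal_pow]
    linear_combination (2 * (μ : ℂ) * (ν : ℂ) * (Real.sin θ : ℂ)
        * ((1 / Real.cosh (f t x) : ℝ) : ℂ) ^ 2) * Complex.I_sq
      + (2 * (ν : ℂ) * ((1 / Real.cosh (f t x) : ℝ) : ℂ) ^ 2) * hCSC
end
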